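/- arXiv:1709.04265 — 2 statements merged into one kernel-verified Lean document; each statement's English description precedes it below -/
import Mathlib

section
/- Let n ≥ 1, let N and Ñ be positive integers, let α ∈ (0, π/2), and let φ : ℝⁿ → ℂ be smooth and compactly supported. Then there exists C > 0 (depending on n, N, Ñ, α, φ) such that for every nonzero ξ ∈ ℝⁿ and every smooth compactly supported u : ℝⁿ → ℂ, ∫_{{η ≠ 0 : ⟨ξ,η⟩ ≤ ‖ξ‖‖η‖ cos α}} |φ̂(ξ−η)| |û(η)| dη ≤ C (1+‖ξ‖)^{−N} ‖(1+‖η‖)^{−Ñ} û(η)‖_{L²(ℝⁿ)}. -/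
open MeasureTheory
open FourierTransform ENNReal

noncomputable def mySchwartz {n : ℕ} (f : EuclideanSpace ℝ (Fin n) → ℂ)
    (hf : ContDiff ℝ (⊤ : ℕ∞) f) (hfc : HasCompactSupport f) :
    SchwartzMap (EuclideanSpace ℝ (Fin n)) ℂ where
  toFun := f
  smooth' := hf.of_le (by simp)
  decay' := by
    intro k m
    have hg : HasCompactSupport fun x : EuclideanSpace ℝ (Fin n) =>
        ‖x‖ ^ k * ‖iteratedFDeriv ℝ m f x‖ := ((hfc.iteratedFDeriv m).norm).mul_left
    have hgc : Continuous fun x : EuclideanSpace ℝ (Fin n) =>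
        ‖x‖ ^ k * ‖iteratedFDeriv ℝ m f x‖ :=
      ((continuous_norm.pow k).mul (hf.continuous_iteratedFDeriv (by exact_mod_cast le_top)).norm)
    obtain ⟨C, hC⟩ := hg.exists_bound_of_continuous hgc
    exact ⟨C, fun x => le_trans (le_abs_self _) (by rw [← Real.norm_eq_abs]; exact hC x)⟩

theorem schwartz_decay {n : ℕ} (f : SchwartzMap (EuclideanSpace ℝ (Fin n)) ℂ) (k : ℕ) :
    ∃ C > 0, ∀ x, ‖f x‖ ≤ C * ((1 + ‖x‖) ^ k)⁻¹ := by
  have h := fun x => SchwartzMap.one_add_le_sup_seminorm_apply (𝕜 := ℝ) (m := (k, 0))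
    le_rfl le_rfl f x
  set M : ℝ := 2 ^ k * (Finset.Iic (k, 0)).sup
    (fun m => SchwartzMap.seminorm ℝ m.1 m.2) f with hM
  refine ⟨M + 1, by positivity, fun x => ?_⟩
  have h1 : (0:ℝ) < (1 + ‖x‖) ^ k := by positivity
  rw [le_mul_inv_iff₀ h1]
  have := h x
  rw [norm_iteratedFDeriv_zero] at this
  nlinarith [this, norm_nonneg (f x)]

theorem cone_est {n : ℕ} {α : ℝ} (h0 : 0 < Real.cos α) (h1 : Real.cos α < 1)
    (ξ η : EuclideanSpace ℝ (Fin n)) (h : (inner ℝ ξ η : ℝ) ≤ ‖ξ‖ * ‖η‖ * Real.cos α) :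
    Real.sqrt ((1 - Real.cos α) / 2) * (1 + ‖ξ‖ + ‖η‖) ≤ 1 + ‖ξ - η‖ := by
  set c := Real.sqrt ((1 - Real.cos α) / 2) with hcdef
  have hc2 : c ^ 2 = (1 - Real.cos α) / 2 := Real.sq_sqrt (by linarith)
  have hc0 : 0 < c := Real.sqrt_pos.2 (by linarith)
  have hc1 : c ≤ 1 := Real.sqrt_le_one.2 (by linarith)
  have e : ‖ξ - η‖ ^ 2 = ‖ξ‖ ^ 2 - 2 * (inner ℝ ξ η : ℝ) + ‖η‖ ^ 2 :=
    norm_sub_sq_real ξ η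
  have key : (c * (‖ξ‖ + ‖η‖)) ^ 2 ≤ ‖ξ - η‖ ^ 2 := by
    nlinarith [sq_nonneg (‖ξ‖ - ‖η‖), norm_nonneg ξ, norm_nonneg η,
      mul_le_mul_of_nonneg_left (sq_nonneg (‖ξ‖ - ‖η‖)) h0.le]
  have key2 : c * (‖ξ‖ + ‖η‖) ≤ ‖ξ - η‖ := by
    have h2 : (0:ℝ) ≤ c * (‖ξ‖ + ‖η‖) := by positivity
    exact pow_le_pow_iff_left₀ h2 (norm_nonneg _) two_ne_zero |>.1 key
  nlinarith [norm_nonneg (ξ - η)]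

/-- Estimate of the part of the convolution integral where the angle between
`ξ` and `η` is at least `α ∈ (0, π/2)`: for smooth compactly supported `φ`, there is `C > 0`
such that for every nonzero `ξ` and every smooth compactly supported `u`,
`∫_{⟨ξ,η⟩ ≤ ‖ξ‖‖η‖ cos α, η ≠ 0} |φ̂(ξ−η)||û(η)| dη ≤ C (1+‖ξ‖)^{−N} ‖(1+‖η‖)^{−N'} û‖_{L²(ℝⁿ)}`. -/
theorem fourier_conv_far_cone_bound (n : ℕ) (hn : 1 ≤ n) (N N' : ℕ) (hN : 0 < N)
    (hN' : 0 < N') (α : ℝ) (hα : α ∈ Set.Ioo 0 (Real.pi / 2))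
    (φ : EuclideanSpace ℝ (Fin n) → ℂ) (hφ : ContDiff ℝ (⊤ : ℕ∞) φ) (hφc : HasCompactSupport φ) :
    ∃ C > 0, ∀ ξ : EuclideanSpace ℝ (Fin n), ξ ≠ 0 →
      ∀ u : EuclideanSpace ℝ (Fin n) → ℂ, ContDiff ℝ (⊤ : ℕ∞) u → HasCompactSupport u →
      ∫ η in {η : EuclideanSpace ℝ (Fin n) | η ≠ 0 ∧
          (inner ℝ ξ η : ℝ) ≤ ‖ξ‖ * ‖η‖ * Real.cos α},
          ‖FourierTransform.fourier φ (ξ - η)‖ * ‖FourierTransform.fourier u η‖ ≤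
        C * ((1 + ‖ξ‖) ^ N)⁻¹ *
          (eLpNorm (fun η => ((1 + ‖η‖) ^ N')⁻¹ * ‖FourierTransform.fourier u η‖) 2
            volume).toReal := by
  obtain ⟨hα0, hαπ⟩ := hα
  have hπ := Real.pi_pos
  have hcos0 : 0 < Real.cos α := Real.cos_pos_of_mem_Ioo ⟨by linarith, hαπ⟩
  have hcos1 : Real.cos α < 1 := by
    have := Real.cos_lt_cos_of_nonneg_of_le_pi le_rfl (by linarith) hα0
    simpa using this
  set c := Real.sqrt ((1 - Real.cos α) / 2) with hcdef
  have hc0 : 0 < c := Real.sqrt_pos.2 (by linarith)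
  have hc1 : c ≤ 1 := Real.sqrt_le_one.2 (by linarith)
  set m := 2 * (N + N' + n) with hm
  -- decay of the Fourier transform of φ
  obtain ⟨Cφ, hCφ0, hCφ'⟩ := schwartz_decay (SchwartzMap.fourierTransformCLM ℂ
    (mySchwartz φ hφ hφc)) m
  have hCφ : ∀ ζ, ‖FourierTransform.fourier φ ζ‖ ≤ Cφ * ((1 + ‖ζ‖) ^ m)⁻¹ := by
    intro ζ; exact hCφ' ζ
  -- the weight w and its L² norm
  set w : EuclideanSpace ℝ (Fin n) → ℝ := fun η => ((1 + ‖η‖) ^ n)⁻¹ with hwdef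
  have hw_nonneg : ∀ η, 0 ≤ w η := fun η => by positivity
  have hw_cont : Continuous w := by
    have : Continuous fun η : EuclideanSpace ℝ (Fin n) => (1 + ‖η‖) ^ n :=
      (continuous_const.add continuous_norm).pow n
    exact this.inv₀ (fun η => by positivity)
  set W2 : ℝ≥0∞ := ∫⁻ η : EuclideanSpace ℝ (Fin n), ENNReal.ofReal (w η) ^ (2 : ℝ) with hW2def
  have hw_sq : ∀ η : EuclideanSpace ℝ (Fin n),
      ENNReal.ofReal (w η) ^ (2 : ℝ) = ENNReal.ofReal ((1 + ‖η‖) ^ (-(2 * n : ℝ))) := by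
    intro η
    have h1 : (0:ℝ) < 1 + ‖η‖ := by positivity
    have : ENNReal.ofReal (w η) ^ (2 : ℝ) = ENNReal.ofReal (w η ^ 2) := by
      rw [show ((2:ℝ)) = ((2:ℕ):ℝ) by norm_num, ENNReal.rpow_natCast,
        ENNReal.ofReal_pow (hw_nonneg η)]
    have h2 : ((1 + ‖η‖:ℝ)) ^ (-(2 * n : ℝ)) = (((1 + ‖η‖) ^ (2 * n : ℕ) : ℝ))⁻¹ := by
      rw [← Real.rpow_natCast (1 + ‖η‖) (2 * n), ← Real.rpow_neg h1.le]
      norm_num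
    rw [this, h2]
    congr 1
    rw [show w η = ((1 + ‖η‖) ^ n)⁻¹ from rfl, inv_pow, ← pow_mul, Nat.mul_comm]
  have hW2 : W2 < ⊤ := by
    have hint : Integrable (fun η : EuclideanSpace ℝ (Fin n) =>
        (1 + ‖η‖) ^ (-(2 * n : ℝ))) := by
      apply integrable_one_add_norm
      rw [finrank_euclideanSpace_fin]
      push_cast
      have : (1:ℝ) ≤ n := by exact_mod_cast hn
      linarith
    calc W2 = ∫⁻ η, ENNReal.ofReal ((1 + ‖η‖) ^ (-(2 * n : ℝ))) := by
          rw [hW2def]; exact lintegral_congr hw_sq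
      _ < ⊤ := hint.lintegral_lt_top
  set W : ℝ≥0∞ := W2 ^ (1/2 : ℝ) with hWdef
  have hW : W ≠ ⊤ := by
    rw [hWdef]
    exact (ENNReal.rpow_lt_top_of_nonneg (by norm_num) hW2.ne).ne
  set B := Cφ / c ^ m with hBdef
  have hB0 : 0 < B := by positivity
  refine ⟨B * (W.toReal + 1), by positivity, ?_⟩
  intro ξ hξ u hu huc
  -- decay of 𝓕 u
  obtain ⟨Cu, hCu0, hCu'⟩ := schwartz_decay (SchwartzMap.fourierTransformCLM ℂ
    (mySchwartz u hu huc)) n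
  have hCu : ∀ η, ‖FourierTransform.fourier u η‖ ≤ Cu * w η := by
    intro η; exact hCu' η
  have hucont : Continuous fun η : EuclideanSpace ℝ (Fin n) => FourierTransform.fourier u η :=
    (SchwartzMap.fourierTransformCLM ℂ (mySchwartz u hu huc)).continuous
  set G : EuclideanSpace ℝ (Fin n) → ℝ :=
    fun η => ((1 + ‖η‖) ^ N')⁻¹ * ‖FourierTransform.fourier u η‖ with hGdef
  have hG_nonneg : ∀ η, 0 ≤ G η := fun η => by positivity
  have hG_cont : Continuous G := by
    apply Continuous.mul
    · exact (((continuous_const.add continuous_norm).pow N')).inv₀ (fun η : EuclideanSpace ℝ (Fin n) => (by positivity : (0:ℝ) < (1 + ‖η‖) ^ N').ne')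
    · exact hucont.norm
  -- the L² norm of G as a lintegral
  have heLp : eLpNorm G 2 volume = (∫⁻ η, ENNReal.ofReal (G η) ^ (2:ℝ)) ^ (1/2 : ℝ) := by
    rw [eLpNorm_eq_lintegral_rpow_enorm_toReal (by norm_num) (by norm_num)]
    simp only [ENNReal.toReal_ofNat]
    congr 1
    exact lintegral_congr fun η => by rw [Real.enorm_eq_ofReal (hG_nonneg η)]
  have hG2 : (∫⁻ η, ENNReal.ofReal (G η) ^ (2:ℝ)) < ⊤ := by
    have hb : ∀ η, ENNReal.ofReal (G η) ^ (2:ℝ) ≤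
        ENNReal.ofReal Cu ^ (2:ℝ) * ENNReal.ofReal (w η) ^ (2:ℝ) := by
      intro η
      rw [← ENNReal.mul_rpow_of_nonneg _ _ (by norm_num), ← ENNReal.ofReal_mul hCu0.le]
      apply ENNReal.rpow_le_rpow _ (by norm_num)
      apply ENNReal.ofReal_le_ofReal
      calc G η ≤ 1 * ‖FourierTransform.fourier u η‖ := by
            apply mul_le_mul_of_nonneg_right _ (norm_nonneg _)
            apply inv_le_one_of_one_le₀
            apply one_le_pow₀
            linarith [norm_nonneg η]
        _ = ‖FourierTransform.fourier u η‖ := one_mul _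
        _ ≤ Cu * w η := hCu η
    calc (∫⁻ η, ENNReal.ofReal (G η) ^ (2:ℝ))
        ≤ ∫⁻ η, ENNReal.ofReal Cu ^ (2:ℝ) * ENNReal.ofReal (w η) ^ (2:ℝ) :=
          lintegral_mono hb
      _ = ENNReal.ofReal Cu ^ (2:ℝ) * W2 := by
          exact lintegral_const_mul' _ _ (ENNReal.rpow_ne_top_of_nonneg (by norm_num) ENNReal.ofReal_ne_top)
      _ < ⊤ := ENNReal.mul_lt_top (ENNReal.rpow_lt_top_of_nonneg (by norm_num) ENNReal.ofReal_ne_top) hW2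
  have heLpfin : eLpNorm G 2 volume ≠ ⊤ := by
    rw [heLp]
    exact (ENNReal.rpow_lt_top_of_nonneg (by norm_num) hG2.ne).ne
  -- the set S and its measurability
  set S : Set (EuclideanSpace ℝ (Fin n)) := {η | η ≠ 0 ∧
    (inner ℝ ξ η : ℝ) ≤ ‖ξ‖ * ‖η‖ * Real.cos α} with hSdef
  have hSmeas : MeasurableSet S := by
    have h1 : MeasurableSet {η : EuclideanSpace ℝ (Fin n) | η ≠ 0} :=
      (measurableSet_singleton (0 : EuclideanSpace ℝ (Fin n))).compl
    have h2 : MeasurableSet {η : EuclideanSpace ℝ (Fin n) |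
        (inner ℝ ξ η : ℝ) ≤ ‖ξ‖ * ‖η‖ * Real.cos α} :=
      measurableSet_le ((continuous_const.inner continuous_id).measurable)
        (((continuous_const.mul continuous_norm).mul continuous_const).measurable)
    exact h1.inter h2
  -- the pointwise bound on S
  have hXpos : (0:ℝ) < (1 + ‖ξ‖) ^ N := by positivity
  have hpoint : ∀ η ∈ S, ‖FourierTransform.fourier φ (ξ - η)‖ * ‖FourierTransform.fourier u η‖ ≤
      B * ((1 + ‖ξ‖) ^ N)⁻¹ * (w η * G η) := by
    intro η hη
    have hcone := cone_est hcos0 hcos1 ξ η hη.2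
    have haux : (0:ℝ) < 1 + ‖ξ‖ := by positivity
    have haux' : (0:ℝ) < 1 + ‖η‖ := by positivity
    set X := (1 + ‖ξ‖) ^ N * ((1 + ‖η‖) ^ n * (1 + ‖η‖) ^ N') with hXdef
    have hXp : (0:ℝ) < X := by positivity
    have hkey : c ^ m * X ≤ (1 + ‖ξ - η‖) ^ m := by
      have h1 : (c * (1 + ‖ξ‖ + ‖η‖)) ^ m ≤ (1 + ‖ξ - η‖) ^ m :=
        pow_le_pow_left₀ (by positivity) hcone m
      have h2 : (1 + ‖ξ‖) * (1 + ‖η‖) ≤ (1 + ‖ξ‖ + ‖η‖) ^ 2 := by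
        nlinarith [norm_nonneg ξ, norm_nonneg η]
      have h3 : ((1 + ‖ξ‖) * (1 + ‖η‖)) ^ (N + N' + n) ≤
          ((1 + ‖ξ‖ + ‖η‖) ^ 2) ^ (N + N' + n) :=
        pow_le_pow_left₀ (by positivity) h2 _
      have h4 : (1 + ‖ξ‖) ^ N ≤ (1 + ‖ξ‖) ^ (N + N' + n) :=
        pow_le_pow_right₀ (by linarith [norm_nonneg ξ]) (by omega)
      have h5 : (1 + ‖η‖) ^ n * (1 + ‖η‖) ^ N' ≤ (1 + ‖η‖) ^ (N + N' + n) := by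
        rw [← pow_add]
        exact pow_le_pow_right₀ (by linarith [norm_nonneg η]) (by omega)
      have hcm : (0:ℝ) < c ^ m := by positivity
      calc c ^ m * X ≤ c ^ m * ((1 + ‖ξ‖) ^ (N + N' + n) * (1 + ‖η‖) ^ (N + N' + n)) := by
            apply mul_le_mul_of_nonneg_left _ hcm.le
            rw [hXdef]
            exact mul_le_mul h4 h5 (by positivity) (by positivity)
        _ = c ^ m * ((1 + ‖ξ‖) * (1 + ‖η‖)) ^ (N + N' + n) := by rw [mul_pow]
        _ ≤ c ^ m * ((1 + ‖ξ‖ + ‖η‖) ^ 2) ^ (N + N' + n) :=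
            mul_le_mul_of_nonneg_left h3 hcm.le
        _ = (c * (1 + ‖ξ‖ + ‖η‖)) ^ m := by
            rw [mul_pow, ← pow_mul, hm]
        _ ≤ (1 + ‖ξ - η‖) ^ m := h1
    have hinv : ((1 + ‖ξ - η‖) ^ m)⁻¹ ≤ (c ^ m * X)⁻¹ := by
      apply inv_anti₀ (by positivity) hkey
    calc ‖FourierTransform.fourier φ (ξ - η)‖ * ‖FourierTransform.fourier u η‖
        ≤ (Cφ * ((1 + ‖ξ - η‖) ^ m)⁻¹) * ‖FourierTransform.fourier u η‖ :=
          mul_le_mul_of_nonneg_right (hCφ _) (norm_nonneg _)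
      _ ≤ (Cφ * (c ^ m * X)⁻¹) * ‖FourierTransform.fourier u η‖ :=
          mul_le_mul_of_nonneg_right
            (mul_le_mul_of_nonneg_left hinv hCφ0.le) (norm_nonneg _)
      _ = B * ((1 + ‖ξ‖) ^ N)⁻¹ * (w η * G η) := by
          simp only [hBdef, hXdef, hGdef, hwdef]
          rw [mul_inv, mul_inv, div_eq_mul_inv]
          ring
  -- putting everything together
  have hFcont : Continuous fun η : EuclideanSpace ℝ (Fin n) =>
      ‖FourierTransform.fourier φ (ξ - η)‖ * ‖FourierTransform.fourier u η‖ := by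
    have hφcont : Continuous fun ζ : EuclideanSpace ℝ (Fin n) => FourierTransform.fourier φ ζ :=
      (SchwartzMap.fourierTransformCLM ℂ (mySchwartz φ hφ hφc)).continuous
    exact ((hφcont.comp (continuous_const.sub continuous_id)).norm).mul hucont.norm
  have step1 : ∫ η in S, ‖FourierTransform.fourier φ (ξ - η)‖ * ‖FourierTransform.fourier u η‖ =
      (∫⁻ η in S, ENNReal.ofReal
        (‖FourierTransform.fourier φ (ξ - η)‖ * ‖FourierTransform.fourier u η‖)).toReal := by
    apply integral_eq_lintegral_of_nonneg_ae
    · exact Filter.Eventually.of_forall fun η => by positivity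
    · exact hFcont.aestronglyMeasurable.restrict
  have hwmeas : Measurable fun η : EuclideanSpace ℝ (Fin n) => ENNReal.ofReal (w η) :=
    (ENNReal.measurable_ofReal.comp hw_cont.measurable)
  have hGmeas : Measurable fun η : EuclideanSpace ℝ (Fin n) => ENNReal.ofReal (G η) :=
    (ENNReal.measurable_ofReal.comp hG_cont.measurable)
  have step2 : (∫⁻ η in S, ENNReal.ofReal
        (‖FourierTransform.fourier φ (ξ - η)‖ * ‖FourierTransform.fourier u η‖)) ≤
      ENNReal.ofReal (B * ((1 + ‖ξ‖) ^ N)⁻¹) * (W * eLpNorm G 2 volume) := by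
    calc (∫⁻ η in S, ENNReal.ofReal
          (‖FourierTransform.fourier φ (ξ - η)‖ * ‖FourierTransform.fourier u η‖))
        ≤ ∫⁻ η in S, ENNReal.ofReal (B * ((1 + ‖ξ‖) ^ N)⁻¹ * (w η * G η)) :=
          setLIntegral_mono' hSmeas fun η hη => ENNReal.ofReal_le_ofReal (hpoint η hη)
      _ ≤ ∫⁻ η, ENNReal.ofReal (B * ((1 + ‖ξ‖) ^ N)⁻¹ * (w η * G η)) :=
          setLIntegral_le_lintegral _ _
      _ = ENNReal.ofReal (B * ((1 + ‖ξ‖) ^ N)⁻¹) *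
          ∫⁻ η, ENNReal.ofReal (w η) * ENNReal.ofReal (G η) := by
          rw [← lintegral_const_mul' _ _ ENNReal.ofReal_ne_top]
          refine lintegral_congr fun η => ?_
          rw [← ENNReal.ofReal_mul (hw_nonneg η), ← ENNReal.ofReal_mul (by positivity)]
      _ ≤ ENNReal.ofReal (B * ((1 + ‖ξ‖) ^ N)⁻¹) * (W * eLpNorm G 2 volume) := by
          apply mul_le_mul_right _ _
          have hhold := ENNReal.lintegral_mul_le_Lp_mul_Lq volume
            (Real.HolderConjugate.two_two : Real.HolderConjugate 2 2)
            hwmeas.aemeasurable hGmeas.aemeasurable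
          calc (∫⁻ η, ENNReal.ofReal (w η) * ENNReal.ofReal (G η))
              = ∫⁻ η, ((fun η => ENNReal.ofReal (w η)) * fun η => ENNReal.ofReal (G η)) η :=
                rfl
            _ ≤ (∫⁻ η, ENNReal.ofReal (w η) ^ (2:ℝ)) ^ (1/2:ℝ) *
                (∫⁻ η, ENNReal.ofReal (G η) ^ (2:ℝ)) ^ (1/2:ℝ) := hhold
            _ = W * eLpNorm G 2 volume := by rw [heLp]
  rw [step1]
  have hfin : ENNReal.ofReal (B * ((1 + ‖ξ‖) ^ N)⁻¹) * (W * eLpNorm G 2 volume) ≠ ⊤ :=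
    ENNReal.mul_ne_top ENNReal.ofReal_ne_top (ENNReal.mul_ne_top hW heLpfin)
  calc (∫⁻ η in S, ENNReal.ofReal
        (‖FourierTransform.fourier φ (ξ - η)‖ * ‖FourierTransform.fourier u η‖)).toReal
      ≤ (ENNReal.ofReal (B * ((1 + ‖ξ‖) ^ N)⁻¹) * (W * eLpNorm G 2 volume)).toReal :=
        ENNReal.toReal_mono hfin step2
    _ = B * ((1 + ‖ξ‖) ^ N)⁻¹ * (W.toReal * (eLpNorm G 2 volume).toReal) := by
        rw [ENNReal.toReal_mul, ENNReal.toReal_mul,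
          ENNReal.toReal_ofReal (by positivity)]
    _ ≤ B * (W.toReal + 1) * ((1 + ‖ξ‖) ^ N)⁻¹ * (eLpNorm G 2 volume).toReal := by
        have h1 : (0:ℝ) ≤ ((1 + ‖ξ‖) ^ N)⁻¹ := by positivity
        have h2 : (0:ℝ) ≤ (eLpNorm G 2 volume).toReal := ENNReal.toReal_nonneg
        have h3 : (0:ℝ) ≤ W.toReal := ENNReal.toReal_nonneg
        nlinarith [mul_nonneg (mul_nonneg hB0.le h1) h2]
end

section
/- Let n ≥ 1, let 0 ≤ k ≤ n, and let L be a real symmetric n×n matrix with no zero eigenvalue, with eigenvalues χ₁ ≤ … ≤ χ_r < 0 < χ_{r+1} ≤ … ≤ χ_n listed with multiplicity. For J ⊆ {1,…,n} with |J| = k and α ∈ ℕⁿ set γ_{J,α} := Σ_{j∈J, j>r} |χ_j| + Σ_{j∉J, j≤r} |χ_j| + Σ_{j=1}^{n} α_j |χ_j|. Then for every z ∈ ℂ the family ( e^{−(z+γ_{J,α})} ) indexed by pairs (J,α) with |J| = k, α ∈ ℕⁿ, is summable, the infinite product F(z) := Π_{(J,α)} ( 1 − e^{−(z+γ_{J,α})}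 ) converges (the family is multipliable), and the resulting function F is analytic on all of ℂ. -/
/-!
Since no `χ j` vanishes, `γ_{J,α} ≥ Σ_j α_j |χ_j|`, so `Σ e^{-γ_{J,α}}` is dominated by a finite
sum of products of geometric series. On a half-plane `Re w > t` each factor then differs from `1`
by at most `e^{-t} e^{-γ_{J,α}}`, a summable bound independent of `w`; hence the product converges
locally uniformly on every half-plane and its limit is entire.
-/

open Polynomial

/-- The exponent `γ_{J,α} = Σ_{j∈J, j>r} |χ_j| + Σ_{j∉J, j≤r} |χ_j| + Σ_j α_j |χ_j|`
(indices `j ≤ r` in the 1-based numbering correspond to `(j : ℕ) < r` for `j : Fin n`). -/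
def ruelleExponent (n r : ℕ) (χ : Fin n → ℝ) (J : Finset (Fin n)) (α : Fin n → ℕ) : ℝ :=
  (∑ j ∈ J.filter (fun j : Fin n => r ≤ (j : ℕ)), |χ j|) +
    (∑ j ∈ (Finset.univ \ J).filter (fun j : Fin n => (j : ℕ) < r), |χ j|) +
    ∑ j, (α j : ℝ) * |χ j|

open Complex

lemma summable_prod_apply_of_nonneg {N : ℕ} {f : Fin N → ℕ → ℝ} (hf0 : ∀ j m, 0 ≤ f j m)
    (hf : ∀ j, Summable (f j)) : Summable fun α : Fin N → ℕ => ∏ j, f j (α j) := by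
  induction N with
  | zero => exact Summable.of_finite
  | succ N ih =>
    have hprod := (hf 0).mul_of_nonneg (ih (fun j => hf0 j.succ) (fun j => hf j.succ))
      (hf0 0) (fun _ => Finset.prod_nonneg fun j _ => hf0 j.succ _)
    rw [← (Fin.consEquiv fun _ => ℕ).summable_iff]
    refine hprod.congr fun x => ?_
    simp only [Function.comp_apply, Fin.consEquiv_apply, Fin.prod_univ_succ, Fin.cons_zero,
      Fin.cons_succ]

lemma sum_mul_abs_le_ruelleExponent (n r : ℕ) (χ : Fin n → ℝ) (J : Finset (Fin n))
    (α : Fin n → ℕ) : ∑ j, (α j : ℝ) * |χ j| ≤ ruelleExponent n r χ J α := by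
  have hpos : ∀ s : Finset (Fin n), 0 ≤ ∑ j ∈ s, |χ j| := fun s =>
    Finset.sum_nonneg fun j _ => abs_nonneg _
  unfold ruelleExponent
  linarith [hpos (J.filter fun j : Fin n => r ≤ (j : ℕ)),
    hpos ((Finset.univ \ J).filter fun j : Fin n => (j : ℕ) < r)]

lemma summable_exp_neg_ruelleExponent (n k r : ℕ) {χ : Fin n → ℝ} (hχ : ∀ j, χ j ≠ 0) :
    Summable fun p : {J : Finset (Fin n) // J.card = k} × (Fin n → ℕ) =>
      Real.exp (-ruelleExponent n r χ p.1.1 p.2) := by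
  have hgeom : Summable fun α : Fin n → ℕ => ∏ j, Real.exp (-|χ j|) ^ α j :=
    summable_prod_apply_of_nonneg (fun _ _ => by positivity) fun j =>
      summable_geometric_of_lt_one (Real.exp_pos _).le
        (Real.exp_lt_one_iff.mpr (neg_neg_of_pos (abs_pos.mpr (hχ j))))
  have hJ : Summable fun _ : {J : Finset (Fin n) // J.card = k} => (1 : ℝ) := .of_finite
  refine (hJ.mul_of_nonneg hgeom (fun _ => zero_le_one) (fun _ => by positivity)).of_nonneg_of_le
    (fun _ => (Real.exp_pos _).le) fun ⟨J, α⟩ => ?_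
  calc Real.exp (-ruelleExponent n r χ J α)
      ≤ Real.exp (-∑ j, (α j : ℝ) * |χ j|) :=
        Real.exp_le_exp.mpr (neg_le_neg (sum_mul_abs_le_ruelleExponent n r χ J α))
    _ = 1 * ∏ j, Real.exp (-|χ j|) ^ α j := by
        rw [one_mul, ← Finset.sum_neg_distrib, Real.exp_sum]
        refine Finset.prod_congr rfl fun j _ => ?_
        rw [← Real.exp_nat_mul, mul_neg]

section EntireProduct

variable {ι : Type*} {γ : ι → ℝ}

lemma norm_cexp_neg_add_le {t : ℝ} {w : ℂ} (hw : t ≤ w.re) (x : ℝ) :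
    ‖exp (-(w + x))‖ ≤ Real.exp (-t) * Real.exp (-x) := by
  rw [norm_exp, ← Real.exp_add]
  exact Real.exp_le_exp.mpr (by simp only [neg_re, add_re, ofReal_re]; linarith)

lemma summable_cexp_neg_add (hγ : Summable fun i => Real.exp (-γ i)) (z : ℂ) :
    Summable fun i => exp (-(z + γ i)) :=
  (hγ.mul_left _).of_norm_bounded fun _ => norm_cexp_neg_add_le le_rfl _

lemma multipliable_one_sub_cexp_neg_add (hγ : Summable fun i => Real.exp (-γ i)) (z : ℂ) :
    Multipliable fun i => 1 - exp (-(z + γ i)) := by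
  simpa only [sub_eq_add_neg] using
    Complex.multipliable_one_add_of_summable (summable_cexp_neg_add hγ z).neg

lemma hasProdLocallyUniformlyOn_one_sub_cexp_neg_add (hγ : Summable fun i => Real.exp (-γ i))
    (t : ℝ) :
    HasProdLocallyUniformlyOn (fun i w => 1 - exp (-(w + γ i)))
      (fun w => ∏' i, (1 - exp (-(w + γ i)))) {w : ℂ | t < w.re} := by
  simp only [sub_eq_add_neg]
  refine (hγ.mul_left (Real.exp (-t))).hasProdLocallyUniformlyOn_one_add
    (isOpen_lt continuous_const continuous_re) (.of_forall fun i w hw => ?_)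
    fun i => by fun_prop
  rw [norm_neg]
  exact norm_cexp_neg_add_le (le_of_lt hw) _

lemma differentiable_tprod_one_sub_cexp_neg_add (hγ : Summable fun i => Real.exp (-γ i)) :
    Differentiable ℂ fun w => ∏' i, (1 - exp (-(w + γ i))) := by
  intro z
  have hopen : IsOpen {w : ℂ | z.re - 1 < w.re} := isOpen_lt continuous_const continuous_re
  refine (hasProdLocallyUniformlyOn_iff_tendstoLocallyUniformlyOn.mp
    (hasProdLocallyUniformlyOn_one_sub_cexp_neg_add hγ (z.re - 1))).differentiableOn
    (.of_forall fun s => ?_) hopen |>.differentiableAt (hopen.mem_nhds (by simp))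
  simpa [Finset.prod_fn] using DifferentiableOn.finsetProd (fun _ _ => by fun_prop)

end EntireProduct

theorem ruelle_product_analytic_general (n : ℕ) (k : ℕ) (χ : Fin n → ℝ) (r : ℕ) (hne : ∀ j, χ j ≠ 0) :
    (∀ z : ℂ,
      Summable (fun p : {J : Finset (Fin n) // J.card = k} × (Fin n → ℕ) =>
        Complex.exp (-(z + (ruelleExponent n r χ p.1.1 p.2 : ℂ)))) ∧
      Multipliable (fun p : {J : Finset (Fin n) // J.card = k} × (Fin n → ℕ) =>
        1 - Complex.exp (-(z + (ruelleExponent n r χ p.1.1 p.2 : ℂ))))) ∧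
    ∀ z : ℂ, AnalyticAt ℂ
      (fun w : ℂ => ∏' p : {J : Finset (Fin n) // J.card = k} × (Fin n → ℕ),
        (1 - Complex.exp (-(w + (ruelleExponent n r χ p.1.1 p.2 : ℂ))))) z := by
  have hγ := summable_exp_neg_ruelleExponent n k r hne
  exact ⟨fun z => ⟨summable_cexp_neg_add hγ z, multipliable_one_sub_cexp_neg_add hγ z⟩,
    (differentiable_tprod_one_sub_cexp_neg_add hγ).analyticAt⟩

/-- With `L` real symmetric with nonzero eigenvalues
`χ₁ ≤ … ≤ χ_r < 0 < χ_{r+1} ≤ … ≤ χ_n`, for every `z ∈ ℂ` the family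
`e^{−(z+γ_{J,α})}` indexed by pairs `(J,α)` with `|J| = k`, `α ∈ ℕⁿ` is summable, the
family `(1 − e^{−(z+γ_{J,α})})` is multipliable, and the resulting infinite product
`F(z) = Π_{(J,α)} (1 − e^{−(z+γ_{J,α})})` is analytic on all of `ℂ`. -/
theorem ruelle_product_analytic (n : ℕ) (hn : 1 ≤ n) (k : ℕ) (hk : k ≤ n)
    (L : Matrix (Fin n) (Fin n) ℝ) (hL : L.IsSymm) (χ : Fin n → ℝ) (hmono : Monotone χ)
    (hchar : L.charpoly = ∏ j, (X - C (χ j)))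
    (r : ℕ) (hr : ∀ j : Fin n, χ j < 0 ↔ (j : ℕ) < r) (hne : ∀ j, χ j ≠ 0) :
    (∀ z : ℂ,
      Summable (fun p : {J : Finset (Fin n) // J.card = k} × (Fin n → ℕ) =>
        Complex.exp (-(z + (ruelleExponent n r χ p.1.1 p.2 : ℂ)))) ∧
      Multipliable (fun p : {J : Finset (Fin n) // J.card = k} × (Fin n → ℕ) =>
        1 - Complex.exp (-(z + (ruelleExponent n r χ p.1.1 p.2 : ℂ))))) ∧
    ∀ z : ℂ, AnalyticAt ℂ
      (fun w : ℂ => ∏' p : {J : Finset (Fin n) // J.card = k} × (Fin n → ℕ),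
        (1 - Complex.exp (-(w + (ruelleExponent n r χ p.1.1 p.2 : ℂ))))) z :=
  ruelle_product_analytic_general n k χ r hne
end
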